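/- Every prefix of an optimal arrangement is optimal: if π is an arrangement of k-mers minimizing the total number of charged (w+k)-windows over all arrangements with the same underlying set U, then for every t ≤ |π|, the prefix π[1..t] minimizes the number of charged windows over all arrangements with underlying set {π[1],…,π[t]}. -/

import Mathlib

/-- The k-mer of the string l starting at position i (0-based). -/
def kmerAt {σ : ℕ} (k : ℕ) (l : List (Fin σ)) (i : ℕ) : List (Fin σ) :=
  (l.drop i).take k

/-- u is the π-minimal k-mer of the window l (k-mers outside π count as larger). -/
def MinIs {σ : ℕ} (k w : ℕ) (π : List (List (Fin σ))) (l : List (Fin σ))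
    (u : List (Fin σ)) : Prop :=
  (∃ i ≤ w, kmerAt k l i = u) ∧ u ∈ π ∧
  ∀ j ≤ w, kmerAt k l j ∈ π → π.idxOf u ≤ π.idxOf (kmerAt k l j)

/-- The window l is charged by the arrangement π: its π-minimal k-mer is the prefix
or the unique suffix of l. -/
def ChargedBy {σ : ℕ} (k w : ℕ) (π : List (List (Fin σ))) (l : List (Fin σ)) : Prop :=
  ∃ u, MinIs k w π l u ∧
    (kmerAt k l 0 = u ∨ (kmerAt k l w = u ∧ ∀ j < w, kmerAt k l j ≠ u))

/-- ch(π): the number of (w+k)-windows charged by π. -/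
noncomputable def chCount (σ k w : ℕ) (π : List (List (Fin σ))) : ℕ :=
  Nat.card {l : List (Fin σ) // l.length = w + k ∧ ChargedBy k w π l}

/-!
Locality of the charge: a window charged by `π₁ ++ π₂` is either charged by `π₁` already, or
none of its k-mers lies in `π₁` and it is charged by `π₂`. Hence
`ch(π₁ ++ π₂) = ch(π₁) + N(π₁, π₂)`, where `N` depends on `π₁` only through its underlying set.
If the prefix `π₁ = π[1..t]` of `π` could be rearranged to `τ` with fewer charged windows, then
`τ ++ π[t+1..]` would be an arrangement of the same set as `π` with fewer charged windows.
-/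

namespace KmerArrangement

variable {σ k w : ℕ}

def ChargedByAfter (k w : ℕ) (π₁ π₂ : List (List (Fin σ))) (l : List (Fin σ)) : Prop :=
  (∀ j ≤ w, kmerAt k l j ∉ π₁) ∧ ChargedBy k w π₂ l

theorem chargedByAfter_congr_left {π₁ π₁' : List (List (Fin σ))} (h : ∀ u, u ∈ π₁ ↔ u ∈ π₁')
    (π₂ : List (List (Fin σ))) (l : List (Fin σ)) :
    ChargedByAfter k w π₁ π₂ l ↔ ChargedByAfter k w π₁' π₂ l := by
  simp only [ChargedByAfter, h]

theorem not_chargedByAfter_of_chargedBy {π₁ π₂ : List (List (Fin σ))} {l : List (Fin σ)}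
    (h : ChargedBy k w π₁ l) : ¬ ChargedByAfter k w π₁ π₂ l := by
  rintro ⟨hout, -⟩
  obtain ⟨u, ⟨⟨i, hi, rfl⟩, hu, -⟩, -⟩ := h
  exact hout i hi hu

theorem chargedBy_append_of_chargedBy {π₁ : List (List (Fin σ))} (π₂ : List (List (Fin σ)))
    {l : List (Fin σ)} (h : ChargedBy k w π₁ l) : ChargedBy k w (π₁ ++ π₂) l := by
  obtain ⟨u, ⟨hocc, hu, hmin⟩, hpos⟩ := h
  refine ⟨u, ⟨hocc, List.mem_append_left _ hu, fun j hj hjmem => ?_⟩, hpos⟩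
  rw [List.idxOf_append_of_mem hu]
  by_cases hj₁ : kmerAt k l j ∈ π₁
  · rw [List.idxOf_append_of_mem hj₁]
    exact hmin j hj hj₁
  · rw [List.idxOf_append_of_notMem hj₁]
    have := List.idxOf_lt_length_of_mem hu
    omega

theorem chargedBy_append_of_chargedByAfter {π₁ π₂ : List (List (Fin σ))} {l : List (Fin σ)}
    (h : ChargedByAfter k w π₁ π₂ l) : ChargedBy k w (π₁ ++ π₂) l := by
  obtain ⟨hout, u, ⟨⟨i, hi, rfl⟩, hu, hmin⟩, hpos⟩ := h
  refine ⟨_, ⟨⟨i, hi, rfl⟩, List.mem_append_right _ hu, fun j hj hjmem => ?_⟩, hpos⟩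
  have hj₂ := (List.mem_append.mp hjmem).resolve_left (hout j hj)
  rw [List.idxOf_append_of_notMem (hout i hi), List.idxOf_append_of_notMem (hout j hj)]
  have := hmin j hj hj₂
  omega

theorem chargedBy_append_iff (π₁ π₂ : List (List (Fin σ))) (l : List (Fin σ)) :
    ChargedBy k w (π₁ ++ π₂) l ↔ ChargedBy k w π₁ l ∨ ChargedByAfter k w π₁ π₂ l := by
  refine ⟨?_, fun h => h.elim (chargedBy_append_of_chargedBy π₂)
    chargedBy_append_of_chargedByAfter⟩
  rintro ⟨u, ⟨hocc, hu, hmin⟩, hpos⟩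
  by_cases hu₁ : u ∈ π₁
  · left
    refine ⟨u, ⟨hocc, hu₁, fun j hj hjmem => ?_⟩, hpos⟩
    simpa only [List.idxOf_append_of_mem hu₁, List.idxOf_append_of_mem hjmem] using
      hmin j hj (List.mem_append_left _ hjmem)
  · right
    have hout : ∀ j ≤ w, kmerAt k l j ∉ π₁ := by
      intro j hj hjmem
      have h := hmin j hj (List.mem_append_left _ hjmem)
      rw [List.idxOf_append_of_mem hjmem, List.idxOf_append_of_notMem hu₁] at h
      have := List.idxOf_lt_length_of_mem hjmem
      omega
    refine ⟨hout, u, ⟨hocc, (List.mem_append.mp hu).resolve_left hu₁, fun j hj hjmem => ?_⟩, hpos⟩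
    have h := hmin j hj (List.mem_append_right _ hjmem)
    rw [List.idxOf_append_of_notMem hu₁, List.idxOf_append_of_notMem (hout j hj)] at h
    omega

theorem chCount_append (π₁ π₂ : List (List (Fin σ))) :
    chCount σ k w (π₁ ++ π₂) = chCount σ k w π₁ +
      Nat.card {l : List (Fin σ) // l.length = w + k ∧ ChargedByAfter k w π₁ π₂ l} := by
  have hfin : {l : List (Fin σ) | l.length = w + k}.Finite := List.finite_length_eq _ _
  have hsplit : {l : List (Fin σ) | l.length = w + k ∧ ChargedBy k w (π₁ ++ π₂) l} =
      {l | l.length = w + k ∧ ChargedBy k w π₁ l} ∪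
      {l | l.length = w + k ∧ ChargedByAfter k w π₁ π₂ l} := by
    ext l
    simp only [Set.mem_ofPred_eq, Set.mem_union, chargedBy_append_iff, and_or_left]
  have hdisj : Disjoint {l : List (Fin σ) | l.length = w + k ∧ ChargedBy k w π₁ l}
      {l | l.length = w + k ∧ ChargedByAfter k w π₁ π₂ l} :=
    Set.disjoint_left.mpr fun _ h₁ h₂ => not_chargedByAfter_of_chargedBy h₁.2 h₂.2
  have hcard := Set.ncard_union_eq hdisj (hfin.subset fun _ h => h.1) (hfin.subset fun _ h => h.1)
  rw [← hsplit] at hcard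
  exact hcard

theorem chCount_le_of_append_le {π₁ τ : List (List (Fin σ))} (π₂ : List (List (Fin σ)))
    (hmem : ∀ u, u ∈ π₁ ↔ u ∈ τ) (hle : chCount σ k w (π₁ ++ π₂) ≤ chCount σ k w (τ ++ π₂)) :
    chCount σ k w π₁ ≤ chCount σ k w τ := by
  have hafter : Nat.card {l : List (Fin σ) // l.length = w + k ∧ ChargedByAfter k w π₁ π₂ l} =
      Nat.card {l : List (Fin σ) // l.length = w + k ∧ ChargedByAfter k w τ π₂ l} :=
    Nat.card_congr <| Equiv.subtypeEquivRight fun l => by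
      rw [chargedByAfter_congr_left hmem]
  rw [chCount_append, chCount_append, hafter] at hle
  omega

end KmerArrangement

open KmerArrangement in
theorem stmt16_general (σ k w : ℕ)
    (π : List (List (Fin σ)))
    (hopt : ∀ π', List.Perm π' π → chCount σ k w π ≤ chCount σ k w π') :
    ∀ t ≤ π.length, ∀ τ, List.Perm τ (π.take t) →
      chCount σ k w (π.take t) ≤ chCount σ k w τ := by
  intro t _ τ hτ
  have hperm : List.Perm (τ ++ π.drop t) π := by
    simpa only [List.take_append_drop] using hτ.append_right (π.drop t)
  refine chCount_le_of_append_le (π.drop t) (fun u => hτ.mem_iff.symm) ?_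
  rw [List.take_append_drop]
  exact hopt _ hperm

/-- Every prefix of an optimal arrangement is optimal: if π minimizes the number of
charged windows among all arrangements of its underlying set, then each prefix π[1..t]
minimizes it among all arrangements of its own underlying set. -/
theorem stmt16 (σ k w : ℕ) (hσ : 2 ≤ σ) (hk : 2 ≤ k) (hw : 2 ≤ w)
    (π : List (List (Fin σ))) (hnd : π.Nodup) (hall : ∀ u ∈ π, u.length = k)
    (hopt : ∀ π', List.Perm π' π → chCount σ k w π ≤ chCount σ k w π') :
    ∀ t ≤ π.length, ∀ τ, List.Perm τ (π.take t) →
      chCount σ k w (π.take t) ≤ chCount σ k w τ :=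
  stmt16_general σ k w π hopt
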